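/- Descent lemma for one masked gradient step (deterministic version): Let ∇F be L-Lipschitz, let Θ' = Θ − γ∇F(Θ ⊙ m) with step size 0 < γ ≤ 1/(6L), and suppose ‖Θ ⊙ m − Θ‖ ≤ δ‖Θ₀‖. Then F(Θ') ≤ F(Θ) − (γ/3)‖∇F(Θ)‖² + (2γL²δ²/3)‖Θ₀‖². -/

import Mathlib

/-!
The gradient `G` of `F` is `L`-Lipschitz, so `F` lies below its tangent paraboloids:
`F y ≤ F x + ⟪G x, y - x⟫ + L/2 ‖y - x‖²`. For a step `x - γ • g` along an inexact gradient `g`,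
the polarization identity `2⟪G x, g⟫ = ‖G x‖² + ‖g‖² - ‖g - G x‖²` turns this into
`F (x - γ • g) ≤ F x - γ/2 ‖G x‖² + γ/2 ‖g - G x‖²` once `γ L ≤ 1`. For the masked step,
`g = G (Θ ⊙ m)` and the gradient error is at most `L ‖Θ ⊙ m - Θ‖ ≤ L δ ‖Θ₀‖`.
-/

open RealInnerProductSpace Set

section Smooth

variable {E : Type*} [NormedAddCommGroup E] [InnerProductSpace ℝ E] [CompleteSpace E]
  {F : E → ℝ} {G : E → E} {L : ℝ}

theorem HasGradientAt.hasDerivAt_comp_add_smul {g x v : E} {t : ℝ}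
    (h : HasGradientAt F g (x + t • v)) :
    HasDerivAt (fun s : ℝ => F (x + s • v)) ⟪g, v⟫ t := by
  have hline : HasDerivAt (fun s : ℝ => x + s • v) v t := by
    simpa using ((hasDerivAt_id t).smul_const v).const_add x
  have hcomp := h.hasFDerivAt.comp_hasDerivAt t hline
  simp only [InnerProductSpace.toDual_apply_apply] at hcomp
  exact hcomp

theorem le_add_inner_add_sq_of_lipschitz_gradient (hgrad : ∀ x, HasGradientAt F (G x) x)
    (hlip : ∀ x y, ‖G x - G y‖ ≤ L * ‖x - y‖) (x y : E) :
    F y ≤ F x + ⟪G x, y - x⟫ + L / 2 * ‖y - x‖ ^ 2 := by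
  set v := y - x
  let f : ℝ → ℝ := fun t => F (x + t • v) - F x - t * ⟪G x, v⟫
  have hf : ∀ t, HasDerivAt f (⟪G (x + t • v), v⟫ - ⟪G x, v⟫) t := fun t =>
    (((hgrad _).hasDerivAt_comp_add_smul).sub_const (F x)).sub
      (by simpa using (hasDerivAt_id t).mul_const ⟪G x, v⟫)
  have hB : ∀ t, HasDerivAt (fun t : ℝ => L / 2 * t ^ 2 * ‖v‖ ^ 2) (L * t * ‖v‖ ^ 2) t := fun t =>
    (((hasDerivAt_pow 2 t).const_mul (L / 2)).mul_const (‖v‖ ^ 2)).congr_deriv (by ring)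
  have hderiv_le : ∀ t ∈ Ico (0 : ℝ) 1, ⟪G (x + t • v), v⟫ - ⟪G x, v⟫ ≤ L * t * ‖v‖ ^ 2 := by
    rintro t ⟨ht, -⟩
    calc ⟪G (x + t • v), v⟫ - ⟪G x, v⟫ = ⟪G (x + t • v) - G x, v⟫ := (inner_sub_left _ _ _).symm
      _ ≤ ‖G (x + t • v) - G x‖ * ‖v‖ := real_inner_le_norm _ _
      _ ≤ L * ‖t • v‖ * ‖v‖ := by
        gcongr
        simpa using hlip (x + t • v) x
      _ = L * t * ‖v‖ ^ 2 := by rw [norm_smul, Real.norm_of_nonneg ht]; ring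
  have key := image_le_of_deriv_right_le_deriv_boundary
    (fun t _ => (hf t).continuousAt.continuousWithinAt) (fun t _ => (hf t).hasDerivWithinAt)
    (by simp [f]) (fun t _ => (hB t).continuousAt.continuousWithinAt)
    (fun t _ => (hB t).hasDerivWithinAt) hderiv_le (right_mem_Icc.2 zero_le_one)
  simp only [f, one_smul, one_mul, one_pow, v, add_sub_cancel] at key
  linarith

theorem le_sub_sq_add_sq_of_inexact_gradient_step (hgrad : ∀ x, HasGradientAt F (G x) x)
    (hlip : ∀ x y, ‖G x - G y‖ ≤ L * ‖x - y‖) {γ : ℝ} (hγ : 0 ≤ γ) (hγL : γ * L ≤ 1)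
    (x g : E) :
    F (x - γ • g) ≤ F x - γ / 2 * ‖G x‖ ^ 2 + γ / 2 * ‖g - G x‖ ^ 2 := by
  have hdescent := le_add_inner_add_sq_of_lipschitz_gradient hgrad hlip x (x - γ • g)
  rw [sub_sub_cancel_left, inner_neg_right, real_inner_smul_right, norm_neg, norm_smul,
    Real.norm_of_nonneg hγ] at hdescent
  have hpolar := norm_sub_sq_real g (G x)
  have hgap : 0 ≤ γ * (1 - γ * L) * ‖g‖ ^ 2 :=
    mul_nonneg (mul_nonneg hγ (sub_nonneg.2 hγL)) (sq_nonneg _)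
  rw [real_inner_comm] at hpolar
  linear_combination hdescent + hgap / 2 - γ / 2 * hpolar

end Smooth

theorem masked_step_descent_general {d : ℕ} (F : EuclideanSpace ℝ (Fin d) → ℝ)
    (G : EuclideanSpace ℝ (Fin d) → EuclideanSpace ℝ (Fin d))
    (L δ γ : ℝ) (hL : 0 < L) (hγ : 0 < γ) (hγL : γ ≤ 1 / (6 * L))
    (hgrad : ∀ x, HasGradientAt F (G x) x)
    (hlip : ∀ x y, ‖G x - G y‖ ≤ L * ‖x - y‖)
    (Θ Θ₀ : EuclideanSpace ℝ (Fin d))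
    (Θm : EuclideanSpace ℝ (Fin d))
    (hmask : ‖Θm - Θ‖ ≤ δ * ‖Θ₀‖) :
    F (Θ - γ • G Θm)
      ≤ F Θ - γ / 3 * ‖G Θ‖ ^ 2 + 2 * γ * L ^ 2 * δ ^ 2 / 3 * ‖Θ₀‖ ^ 2 := by
  have hγL' : γ * L ≤ 1 := by
    rw [le_div_iff₀ (by positivity)] at hγL
    linarith
  have hstep := le_sub_sq_add_sq_of_inexact_gradient_step hgrad hlip hγ.le hγL' Θ (G Θm)
  have herr : ‖G Θm - G Θ‖ ^ 2 ≤ L ^ 2 * δ ^ 2 * ‖Θ₀‖ ^ 2 := by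
    have h := (hlip Θm Θ).trans (mul_le_mul_of_nonneg_left hmask hL.le)
    calc ‖G Θm - G Θ‖ ^ 2 ≤ (L * (δ * ‖Θ₀‖)) ^ 2 := pow_le_pow_left₀ (norm_nonneg _) h 2
      _ = L ^ 2 * δ ^ 2 * ‖Θ₀‖ ^ 2 := by ring
  have herr' := mul_le_mul_of_nonneg_left herr (by positivity : (0 : ℝ) ≤ γ / 2)
  have hG : 0 ≤ γ * ‖G Θ‖ ^ 2 := by positivity
  have hΘ₀ : 0 ≤ γ * (L ^ 2 * δ ^ 2 * ‖Θ₀‖ ^ 2) := by positivity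
  linarith

/-- Deterministic descent for one masked gradient step:
`F(Θ − γ∇F(Θ⊙m)) ≤ F(Θ) − (γ/3)‖∇F(Θ)‖² + (2γL²δ²/3)‖Θ₀‖²` for `0 < γ ≤ 1/(6L)`. -/
theorem masked_step_descent {d : ℕ} (F : EuclideanSpace ℝ (Fin d) → ℝ)
    (G : EuclideanSpace ℝ (Fin d) → EuclideanSpace ℝ (Fin d))
    (L δ γ : ℝ) (hL : 0 < L) (hδ : 0 ≤ δ) (hγ : 0 < γ) (hγL : γ ≤ 1 / (6 * L))
    (hgrad : ∀ x, HasGradientAt F (G x) x)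
    (hlip : ∀ x y, ‖G x - G y‖ ≤ L * ‖x - y‖)
    (Θ Θ₀ m : EuclideanSpace ℝ (Fin d))
    (hm : ∀ j, m j = 0 ∨ m j = 1)
    (Θm : EuclideanSpace ℝ (Fin d)) (hΘm : ∀ j, Θm j = Θ j * m j)
    (hmask : ‖Θm - Θ‖ ≤ δ * ‖Θ₀‖) :
    F (Θ - γ • G Θm)
      ≤ F Θ - γ / 3 * ‖G Θ‖ ^ 2 + 2 * γ * L ^ 2 * δ ^ 2 / 3 * ‖Θ₀‖ ^ 2 :=
  masked_step_descent_general F G L δ γ hL hγ hγL hgrad hlip Θ Θ₀ Θm hmask
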